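/- Let H = [[A,B],[C,D]] ∈ M_N({±1}) be Hadamard with A ∈ M_r({±1}) invertible, r ≤ d, and r² < N. Then with E defined by Pol(D) = (1/√N)(D − E), one has ‖E‖_∞ ≤ r²(1 + √N)/(N − r²). -/

import Mathlib

open Matrix

attribute [local instance] Matrix.normedAddCommGroup

/-!
Write `T = √(A Aᵀ)` and `S = √(Dᵀ D) = |D|`, so that `D = Pol(D) S`. The Hadamard relations
`A Aᵀ + B Bᵀ = N = Bᵀ B + Dᵀ D` give `T² B = B S²`, hence `T B = B S`, and from this
`E = D - √N Pol(D) = C Q (T + √N)⁻¹ B` with `Q = Aᵀ T⁻¹` orthogonal. As the rows of `C` and the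
columns of `B` are `±1` vectors of length `r`, Cauchy–Schwarz and `‖(T + √N)⁻¹‖ ≤ 1/√N` give
`|E i j| ≤ r / √N`, which is below the stated bound.
-/

open scoped MatrixOrder ComplexOrder

namespace Matrix

variable {l m : Type*} [Fintype l] [Fintype m] [DecidableEq l] [DecidableEq m]

section SquareRoot

variable {𝕜 : Type*} [RCLike 𝕜]

theorem mul_eq_zero_of_mul_add_mul_eq_zero {T : Matrix l l 𝕜} {S : Matrix m m 𝕜}
    {X : Matrix l m 𝕜} (hT : T.PosSemidef) (hS : S.PosSemidef) (h : T * X + X * S = 0) :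
    T * X = 0 ∧ X * S = 0 := by
  set U := CFC.sqrt T
  set R := CFC.sqrt S
  have hUU : U * U = T := CFC.sqrt_mul_sqrt_self T hT.nonneg
  have hRR : R * R = S := CFC.sqrt_mul_sqrt_self S hS.nonneg
  have hU : Uᴴ = U := (CFC.sqrt_nonneg T).posSemidef.1
  have hR : Rᴴ = R := (CFC.sqrt_nonneg S).posSemidef.1
  -- `tr (Xᴴ (T X + X S)) = ‖U X‖² + ‖X R‖²` in the Frobenius norm
  have htrace : ((U * X)ᴴ * (U * X)).trace + ((X * R)ᴴ * (X * R)).trace = 0 :=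
    calc _ = (Xᴴ * (T * X)).trace + (Xᴴ * (X * S)).trace := by
          rw [conjTranspose_mul, conjTranspose_mul, hU, hR, Matrix.mul_assoc R, trace_mul_comm R,
            ← hUU, ← hRR]
          simp only [Matrix.mul_assoc]
      _ = 0 := by rw [← trace_add, ← Matrix.mul_add, h, Matrix.mul_zero, trace_zero]
  obtain ⟨hUX, hXR⟩ := (add_eq_zero_iff_of_nonneg (posSemidef_conjTranspose_mul_self _).trace_nonneg
    (posSemidef_conjTranspose_mul_self _).trace_nonneg).mp htrace
  rw [trace_conjTranspose_mul_self_eq_zero_iff] at hUX hXR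
  exact ⟨by rw [← hUU, Matrix.mul_assoc, hUX, Matrix.mul_zero],
    by rw [← hRR, ← Matrix.mul_assoc, hXR, Matrix.zero_mul]⟩

theorem mul_eq_mul_of_mul_self_mul_eq {T : Matrix l l 𝕜} {S : Matrix m m 𝕜} {B : Matrix l m 𝕜}
    (hT : T.PosSemidef) (hS : S.PosSemidef) (h : T * T * B = B * (S * S)) : T * B = B * S := by
  set Y := T * B - B * S
  obtain ⟨hTY, hYS⟩ : T * Y = 0 ∧ Y * S = 0 := by
    refine mul_eq_zero_of_mul_add_mul_eq_zero hT hS ?_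
    simp only [Y, Matrix.mul_sub, Matrix.sub_mul, ← Matrix.mul_assoc, h]
    simp only [Matrix.mul_assoc]
    abel
  have hTB : Yᴴ * (T * B) = (T * Y)ᴴ * B := by
    rw [conjTranspose_mul, hT.1.eq, Matrix.mul_assoc]
  have hBS : (Yᴴ * (B * S)).trace = ((Y * S)ᴴ * B).trace := by
    rw [conjTranspose_mul, hS.1.eq, ← Matrix.mul_assoc, trace_mul_comm, Matrix.mul_assoc]
  have hYY : (Yᴴ * Y).trace = 0 :=
    calc (Yᴴ * Y).trace = (Yᴴ * (T * B)).trace - (Yᴴ * (B * S)).trace := by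
          rw [← trace_sub, ← Matrix.mul_sub]
      _ = 0 := by rw [hTB, hBS, hTY, hYS]; simp
  exact sub_eq_zero.mp (trace_conjTranspose_mul_self_eq_zero_iff.mp hYY)

theorem isUnit_det_cfcSqrt {M : Matrix m m 𝕜} (hM : M.PosSemidef) (h : IsUnit M.det) :
    IsUnit (CFC.sqrt M).det :=
  isUnit_of_mul_isUnit_left (by rwa [← det_mul, CFC.sqrt_mul_sqrt_self M hM.nonneg])

theorem isUnit_det_add_smul_one {T : Matrix m m 𝕜} (hT : T.PosSemidef) {c : ℝ} (hc : 0 < c) :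
    IsUnit (T + c • 1).det :=
  (isUnit_iff_isUnit_det _).mp (PosDef.posSemidef_add hT (PosDef.one.smul hc)).isUnit

end SquareRoot

section Blocks

theorem inv_mul_eq_mul_inv_of_mul_eq {R : Type*} [CommRing R] {X : Matrix l l R}
    {Y : Matrix l m R} {Z : Matrix m m R} (hX : IsUnit X.det) (hZ : IsUnit Z.det)
    (h : X * Y = Y * Z) : X⁻¹ * Y = Y * Z⁻¹ := by
  calc X⁻¹ * Y = X⁻¹ * (Y * Z * Z⁻¹) := by rw [mul_nonsing_inv_cancel_right _ _ hZ]
    _ = X⁻¹ * (X * Y) * Z⁻¹ := by simp only [h, Matrix.mul_assoc]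
    _ = Y * Z⁻¹ := by rw [nonsing_inv_mul_cancel_left _ _ hX]

theorem fromBlocks_mul_transpose_eq_smul_one_iff {R : Type*} [CommRing R] {A : Matrix l l R}
    {B : Matrix l m R} {C : Matrix m l R} {D : Matrix m m R} {N : R} :
    fromBlocks A B C D * (fromBlocks A B C D)ᵀ = N • 1 ↔
      A * Aᵀ + B * Bᵀ = N • 1 ∧ A * Cᵀ + B * Dᵀ = 0 ∧ C * Aᵀ + D * Bᵀ = 0 ∧
        C * Cᵀ + D * Dᵀ = N • 1 := by
  rw [fromBlocks_transpose, fromBlocks_multiply, ← fromBlocks_one, fromBlocks_smul,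
    fromBlocks_inj]
  simp only [smul_zero]

variable {K : Type*} [Field K] {A : Matrix l l K} {B : Matrix l m K} {C : Matrix m l K}
  {D : Matrix m m K} {N : K}

theorem transpose_mul_self_eq_smul_one {H : Matrix l l K} (hN : N ≠ 0) (h : H * Hᵀ = N • 1) :
    Hᵀ * H = N • 1 := by
  have hinv : H * (N⁻¹ • Hᵀ) = 1 := by
    rw [Matrix.mul_smul, h, smul_smul, inv_mul_cancel₀ hN, one_smul]
  calc Hᵀ * H = N • ((N⁻¹ • Hᵀ) * H) := by
        rw [Matrix.smul_mul, smul_smul, mul_inv_cancel₀ hN, one_smul]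
    _ = N • 1 := by rw [mul_eq_one_comm.mp hinv]

theorem transpose_mul_fromBlocks_eq_smul_one (hN : N ≠ 0)
    (h : fromBlocks A B C D * (fromBlocks A B C D)ᵀ = N • 1) :
    Bᵀ * B + Dᵀ * D = N • 1 := by
  have h' : fromBlocks Aᵀ Cᵀ Bᵀ Dᵀ * (fromBlocks Aᵀ Cᵀ Bᵀ Dᵀ)ᵀ = N • 1 := by
    rw [← fromBlocks_transpose, transpose_transpose]
    exact transpose_mul_self_eq_smul_one hN h
  rw [fromBlocks_mul_transpose_eq_smul_one_iff] at h'
  simpa only [transpose_transpose] using h'.2.2.2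

/-- The Schur complement of `A` inverts `Dᵀ` up to the factor `N`: `(D - C A⁻¹ B) Dᵀ = N • 1`. -/
theorem isUnit_det_of_fromBlocks_mul_transpose_eq_smul_one (hN : N ≠ 0) (hA : IsUnit A.det)
    (h : fromBlocks A B C D * (fromBlocks A B C D)ᵀ = N • 1) : IsUnit D.det := by
  obtain ⟨-, h12, -, h22⟩ := fromBlocks_mul_transpose_eq_smul_one_iff.mp h
  have hBD : B * Dᵀ = -(A * Cᵀ) := eq_neg_of_add_eq_zero_right h12
  have hleft : (N⁻¹ • (D - C * A⁻¹ * B)) * Dᵀ = 1 := by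
    rw [Matrix.smul_mul, Matrix.sub_mul, Matrix.mul_assoc (C * A⁻¹), hBD, Matrix.mul_neg,
      ← Matrix.mul_assoc (C * A⁻¹), Matrix.mul_assoc C, nonsing_inv_mul _ hA, Matrix.mul_one,
      sub_neg_eq_add, add_comm, h22, smul_smul, inv_mul_cancel₀ hN, one_smul]
  simpa using isUnit_det_of_left_inverse hleft

end Blocks

section Real

theorem PosSemidef.spectral_sqrt_eq_cfcSqrt {M : Matrix m m ℝ} (hM : M.PosSemidef) :
    hM.1.eigenvectorUnitary * diagonal (Real.sqrt ∘ hM.1.eigenvalues) *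
      (star hM.1.eigenvectorUnitary : Matrix m m ℝ) = CFC.sqrt M := by
  rw [CFC.sqrt_eq_real_sqrt M hM.nonneg, cfcₙ_eq_cfc, hM.1.cfc_eq, IsHermitian.cfc,
    Unitary.conjStarAlgAut_apply]
  -- `RCLike.ofReal` is the identity of `ℝ`
  rfl

theorem transpose_cfcSqrt (M : Matrix m m ℝ) : (CFC.sqrt M)ᵀ = CFC.sqrt M :=
  (CFC.sqrt_nonneg M).posSemidef.1

theorem transpose_mul_inv_cfcSqrt_orthogonal {A : Matrix l l ℝ} (hA : IsUnit A.det) :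
    (Aᵀ * (CFC.sqrt (A * Aᵀ))⁻¹)ᵀ * (Aᵀ * (CFC.sqrt (A * Aᵀ))⁻¹) = 1 := by
  set T := CFC.sqrt (A * Aᵀ)
  have hAA : (A * Aᵀ).PosSemidef := posSemidef_self_mul_conjTranspose A
  have hT : IsUnit T.det := isUnit_det_cfcSqrt hAA (by simpa using hA)
  rw [transpose_mul, transpose_transpose, transpose_nonsing_inv, transpose_cfcSqrt]
  calc T⁻¹ * A * (Aᵀ * T⁻¹) = T⁻¹ * (T * T) * T⁻¹ := by
        rw [CFC.sqrt_mul_sqrt_self _ hAA.nonneg]; simp only [Matrix.mul_assoc]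
    _ = 1 := by rw [nonsing_inv_mul_cancel_left _ _ hT, mul_nonsing_inv _ hT]

theorem sq_mul_dotProduct_self_le {T : Matrix m m ℝ} (hT : T.PosSemidef) {c : ℝ}
    (hc : 0 ≤ c) (z : m → ℝ) :
    c ^ 2 * (z ⬝ᵥ z) ≤ ((T + c • 1) *ᵥ z) ⬝ᵥ ((T + c • 1) *ᵥ z) := by
  have hTz : 0 ≤ z ⬝ᵥ (T *ᵥ z) := by simpa using hT.dotProduct_mulVec_nonneg z
  have hTzTz : 0 ≤ (T *ᵥ z) ⬝ᵥ (T *ᵥ z) := by simpa using dotProduct_star_self_nonneg (T *ᵥ z)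
  have hexpand : ((T + c • 1) *ᵥ z) ⬝ᵥ ((T + c • 1) *ᵥ z) =
      (T *ᵥ z) ⬝ᵥ (T *ᵥ z) + 2 * c * (z ⬝ᵥ (T *ᵥ z)) + c ^ 2 * (z ⬝ᵥ z) := by
    simp only [add_mulVec, smul_mulVec, one_mulVec, dotProduct_add, add_dotProduct,
      dotProduct_smul, smul_dotProduct, smul_eq_mul, dotProduct_comm (T *ᵥ z) z]
    ring
  rw [hexpand]
  nlinarith [mul_nonneg hc hTz]

theorem sq_mul_sq_apply_le_of_orthogonal {k n : Type*} [Fintype k] (C : Matrix k m ℝ)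
    (B : Matrix m n ℝ) {Q T : Matrix m m ℝ} (hQ : Qᵀ * Q = 1) (hT : T.PosSemidef) {c : ℝ}
    (hc : 0 < c) (i : k) (j : n) :
    c ^ 2 * (C * Q * (T + c • 1)⁻¹ * B) i j ^ 2 ≤ (C i ⬝ᵥ C i) * (Bᵀ j ⬝ᵥ Bᵀ j) := by
  set z := (T + c • 1)⁻¹ *ᵥ Bᵀ j
  have hz : (T + c • 1) *ᵥ z = Bᵀ j := by
    rw [mulVec_mulVec, mul_nonsing_inv _ (isUnit_det_add_smul_one hT hc), one_mulVec]
  have hentry : (C * Q * (T + c • 1)⁻¹ * B) i j = C i ⬝ᵥ (Q *ᵥ z) := by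
    rw [Matrix.mul_assoc C, Matrix.mul_assoc C, mul_apply']
    congr 1
    ext
    simp only [z, mulVec_mulVec]
    rfl
  have hQz : (Q *ᵥ z) ⬝ᵥ (Q *ᵥ z) = z ⬝ᵥ z := by
    rw [dotProduct_mulVec, ← mulVec_transpose, mulVec_mulVec, hQ, one_mulVec]
  have hCS : (C i ⬝ᵥ (Q *ᵥ z)) ^ 2 ≤ (C i ⬝ᵥ C i) * ((Q *ᵥ z) ⬝ᵥ (Q *ᵥ z)) := by
    simpa only [dotProduct, sq] using Finset.sum_mul_sq_le_sq_mul_sq Finset.univ (C i) (Q *ᵥ z)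
  have hshift : c ^ 2 * (z ⬝ᵥ z) ≤ Bᵀ j ⬝ᵥ Bᵀ j := hz ▸ sq_mul_dotProduct_self_le hT hc.le z
  have hC : 0 ≤ C i ⬝ᵥ C i := by simpa using dotProduct_star_self_nonneg (C i)
  calc c ^ 2 * (C * Q * (T + c • 1)⁻¹ * B) i j ^ 2 ≤ c ^ 2 * ((C i ⬝ᵥ C i) * (z ⬝ᵥ z)) := by
        rw [hentry, ← hQz]; gcongr
    _ = (C i ⬝ᵥ C i) * (c ^ 2 * (z ⬝ᵥ z)) := by ring
    _ ≤ (C i ⬝ᵥ C i) * (Bᵀ j ⬝ᵥ Bᵀ j) := by gcongr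

variable {A : Matrix l l ℝ} {B : Matrix l m ℝ} {C : Matrix m l ℝ} {D P : Matrix m m ℝ} {N : ℝ}

theorem cfcSqrt_mul_eq_mul_cfcSqrt (hN : N ≠ 0)
    (hH : fromBlocks A B C D * (fromBlocks A B C D)ᵀ = N • 1) :
    CFC.sqrt (A * Aᵀ) * B = B * CFC.sqrt (Dᵀ * D) := by
  obtain ⟨h11, -⟩ := fromBlocks_mul_transpose_eq_smul_one_iff.mp hH
  have h22 := transpose_mul_fromBlocks_eq_smul_one hN hH
  have hAA : (A * Aᵀ).PosSemidef := posSemidef_self_mul_conjTranspose A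
  have hDD : (Dᵀ * D).PosSemidef := posSemidef_conjTranspose_mul_self D
  refine mul_eq_mul_of_mul_self_mul_eq (CFC.sqrt_nonneg _).posSemidef
    (CFC.sqrt_nonneg _).posSemidef ?_
  rw [CFC.sqrt_mul_sqrt_self _ hAA.nonneg, CFC.sqrt_mul_sqrt_self _ hDD.nonneg,
    eq_sub_of_add_eq h11, eq_sub_of_add_eq' h22, Matrix.sub_mul, Matrix.mul_sub,
    Matrix.smul_mul, Matrix.mul_smul, Matrix.one_mul, Matrix.mul_one, Matrix.mul_assoc]

theorem mul_transpose_eq_of_eq_mul_cfcSqrt (hN : N ≠ 0) (hA : IsUnit A.det)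
    (hH : fromBlocks A B C D * (fromBlocks A B C D)ᵀ = N • 1)
    (hP : D = P * CFC.sqrt (Dᵀ * D)) :
    P * Bᵀ = -(C * Aᵀ) * (CFC.sqrt (A * Aᵀ))⁻¹ := by
  obtain ⟨-, -, h21, -⟩ := fromBlocks_mul_transpose_eq_smul_one_iff.mp hH
  have hD := isUnit_det_of_fromBlocks_mul_transpose_eq_smul_one hN hA hH
  have hBT : CFC.sqrt (Dᵀ * D) * Bᵀ = Bᵀ * CFC.sqrt (A * Aᵀ) := by
    simpa only [transpose_mul, transpose_cfcSqrt] using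
      (congrArg transpose (cfcSqrt_mul_eq_mul_cfcSqrt hN hH)).symm
  have hS : IsUnit (CFC.sqrt (Dᵀ * D)).det :=
    isUnit_det_cfcSqrt (posSemidef_conjTranspose_mul_self D) (by simpa using hD)
  have hT : IsUnit (CFC.sqrt (A * Aᵀ)).det :=
    isUnit_det_cfcSqrt (posSemidef_self_mul_conjTranspose A) (by simpa using hA)
  set S := CFC.sqrt (Dᵀ * D)
  rw [show P = D * S⁻¹ by rw [hP, mul_nonsing_inv_cancel_right _ _ hS], Matrix.mul_assoc,
    inv_mul_eq_mul_inv_of_mul_eq hS hT hBT, ← Matrix.mul_assoc,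
    eq_neg_of_add_eq_zero_right h21]

theorem sub_smul_eq_of_eq_mul_cfcSqrt (hN : 0 < N) (hA : IsUnit A.det)
    (hH : fromBlocks A B C D * (fromBlocks A B C D)ᵀ = N • 1)
    (hP : D = P * CFC.sqrt (Dᵀ * D)) :
    D - √N • P =
      C * (Aᵀ * (CFC.sqrt (A * Aᵀ))⁻¹) * (CFC.sqrt (A * Aᵀ) + √N • 1)⁻¹ * B := by
  have h22 := transpose_mul_fromBlocks_eq_smul_one hN.ne' hH
  have hTB := cfcSqrt_mul_eq_mul_cfcSqrt hN.ne' hH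
  have hPB := mul_transpose_eq_of_eq_mul_cfcSqrt hN.ne' hA hH hP
  have hc : 0 < √N := Real.sqrt_pos.2 hN
  have hSc := isUnit_det_add_smul_one (CFC.sqrt_nonneg (Dᵀ * D)).posSemidef hc
  have hTc := isUnit_det_add_smul_one (CFC.sqrt_nonneg (A * Aᵀ)).posSemidef hc
  have hSS : CFC.sqrt (Dᵀ * D) * CFC.sqrt (Dᵀ * D) = Dᵀ * D :=
    CFC.sqrt_mul_sqrt_self _ (posSemidef_conjTranspose_mul_self D).nonneg
  set S := CFC.sqrt (Dᵀ * D)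
  set T := CFC.sqrt (A * Aᵀ)
  set c := √N
  have hshift : (T + c • 1)⁻¹ * B = B * (S + c • 1)⁻¹ :=
    inv_mul_eq_mul_inv_of_mul_eq hTc hSc (by
      rw [Matrix.add_mul, Matrix.mul_add, hTB, Matrix.smul_mul, Matrix.one_mul, Matrix.mul_smul,
        Matrix.mul_one])
  have hfactor : (D - c • P) * (S + c • 1) = -(P * Bᵀ) * B :=
    calc (D - c • P) * (S + c • 1) = P * (S * S) - (c * c) • P := by
          rw [hP]
          simp only [Matrix.sub_mul, Matrix.mul_add, Matrix.smul_mul, Matrix.mul_smul,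
            Matrix.mul_one, Matrix.mul_assoc]
          module
      _ = -(P * Bᵀ) * B := by
          rw [hSS, eq_sub_of_add_eq' h22, Real.mul_self_sqrt hN.le, Matrix.mul_sub,
            Matrix.mul_smul, Matrix.mul_one, Matrix.neg_mul, Matrix.mul_assoc]
          abel
  calc D - c • P = (D - c • P) * (S + c • 1) * (S + c • 1)⁻¹ :=
        (mul_nonsing_inv_cancel_right _ _ hSc).symm
    _ = C * (Aᵀ * T⁻¹) * (T + c • 1)⁻¹ * B := by
        rw [hfactor, hPB, Matrix.mul_assoc _ B, ← hshift]
        simp only [Matrix.neg_mul, neg_neg, Matrix.mul_assoc]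

end Real

end Matrix

theorem dotProduct_self_eq_card {n : Type*} [Fintype n] {v : n → ℝ}
    (hv : ∀ k, v k = 1 ∨ v k = -1) : v ⬝ᵥ v = Fintype.card n := by
  calc v ⬝ᵥ v = ∑ _k : n, (1 : ℝ) :=
        Finset.sum_congr rfl fun k _ => by rcases hv k with h | h <;> simp [h]
    _ = Fintype.card n := by simp

theorem abs_le_of_mul_sq_le {x : ℝ} {r N : ℕ} (hrN : r ^ 2 < N) (h : N * x ^ 2 ≤ r * r) :
    |x| ≤ r ^ 2 * (1 + √N) / (N - r ^ 2) := by
  have hN : (0 : ℝ) ≤ N := N.cast_nonneg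
  have hsqrt : √N * |x| ≤ r := by
    have := Real.sqrt_le_sqrt h
    rwa [Real.sqrt_mul hN, Real.sqrt_sq_eq_abs, Real.sqrt_mul_self r.cast_nonneg] at this
  have hr : (r : ℝ) ≤ r ^ 2 := by exact_mod_cast Nat.le_self_pow two_ne_zero r
  have hgap : (0 : ℝ) < N - r ^ 2 := by
    rw [sub_pos]; exact_mod_cast hrN
  rw [le_div_iff₀ hgap]
  nlinarith [Real.mul_self_sqrt hN, Real.sqrt_nonneg N, abs_nonneg x,
    mul_le_mul_of_nonneg_left hsqrt (Real.sqrt_nonneg N)]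

theorem stmt_12_general (N r d : ℕ) (hrN : r ^ 2 < N)
    (A : Matrix (Fin r) (Fin r) ℝ) (B : Matrix (Fin r) (Fin d) ℝ)
    (C : Matrix (Fin d) (Fin r) ℝ) (D : Matrix (Fin d) (Fin d) ℝ)
    (hsign : ∀ i j, Matrix.fromBlocks A B C D i j = 1 ∨
      Matrix.fromBlocks A B C D i j = -1)
    (hH : Matrix.fromBlocks A B C D * (Matrix.fromBlocks A B C D)ᵀ
      = (N : ℝ) • 1)
    (hA : IsUnit A.det)
    (PD : Matrix (Fin d) (Fin d) ℝ)
    (hPDpol : D = PD * ((Matrix.posSemidef_conjTranspose_mul_self D).1.eigenvectorUnitary *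
      Matrix.diagonal (Real.sqrt ∘ (Matrix.posSemidef_conjTranspose_mul_self D).1.eigenvalues) *
      (star (Matrix.posSemidef_conjTranspose_mul_self D).1.eigenvectorUnitary :
        Matrix (Fin d) (Fin d) ℝ))) :
    ‖D - Real.sqrt N • PD‖ ≤ r ^ 2 * (1 + Real.sqrt N) / (N - r ^ 2) := by
  have hNpos : (0 : ℝ) < N := by exact_mod_cast (Nat.zero_le _).trans_lt hrN
  rw [(posSemidef_conjTranspose_mul_self D).spectral_sqrt_eq_cfcSqrt,
    conjTranspose_eq_transpose_of_trivial] at hPDpol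
  have hbound : 0 ≤ (r : ℝ) ^ 2 * (1 + √N) / (N - r ^ 2) :=
    div_nonneg (by positivity) (sub_nonneg.2 (by exact_mod_cast hrN.le))
  rw [sub_smul_eq_of_eq_mul_cfcSqrt hNpos hA hH hPDpol, norm_le_iff hbound]
  intro i j
  have hentry := sq_mul_sq_apply_le_of_orthogonal C B (transpose_mul_inv_cfcSqrt_orthogonal hA)
    (CFC.sqrt_nonneg (A * Aᵀ)).posSemidef (Real.sqrt_pos.2 hNpos) i j
  rw [Real.sq_sqrt hNpos.le,
    dotProduct_self_eq_card fun k => by simpa using hsign (.inr i) (.inl k),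
    dotProduct_self_eq_card fun k => by simpa using hsign (.inl k) (.inr j),
    Fintype.card_fin] at hentry
  exact abs_le_of_mul_sq_le hrN hentry

/-- Let `H = [[A,B],[C,D]] ∈ M_N(±1)` be Hadamard with `A ∈ M_r(±1)`
invertible, `r ≤ d` and `r² < N`. Then with `E` defined by
`Pol(D) = (1/√N)(D − E)`, i.e. `E = D − √N·Pol(D)`, one has
`‖E‖_∞ ≤ r²(1 + √N)/(N − r²)`. -/
theorem stmt_12 (N r d : ℕ) (hN : N = r + d) (hrd : r ≤ d) (hrN : r ^ 2 < N)
    (A : Matrix (Fin r) (Fin r) ℝ) (B : Matrix (Fin r) (Fin d) ℝ)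
    (C : Matrix (Fin d) (Fin r) ℝ) (D : Matrix (Fin d) (Fin d) ℝ)
    (hsign : ∀ i j, Matrix.fromBlocks A B C D i j = 1 ∨
      Matrix.fromBlocks A B C D i j = -1)
    (hH : Matrix.fromBlocks A B C D * (Matrix.fromBlocks A B C D)ᵀ
      = (N : ℝ) • 1)
    (hA : IsUnit A.det)
    (PD : Matrix (Fin d) (Fin d) ℝ) (hPD : PDᵀ * PD = 1)
    (hPDpol : D = PD * ((Matrix.posSemidef_conjTranspose_mul_self D).1.eigenvectorUnitary *
      Matrix.diagonal (Real.sqrt ∘ (Matrix.posSemidef_conjTranspose_mul_self D).1.eigenvalues) *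
      (star (Matrix.posSemidef_conjTranspose_mul_self D).1.eigenvectorUnitary :
        Matrix (Fin d) (Fin d) ℝ))) :
    ‖D - Real.sqrt N • PD‖ ≤ r ^ 2 * (1 + Real.sqrt N) / (N - r ^ 2) :=
  stmt_12_general N r d hrN A B C D hsign hH hA PD hPDpol
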